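/- Energy bound for the isospectral Hamiltonian flow: let L be linear self-adjoint on u(N) w.r.t. the Frobenius inner product, W ∈ u(N), P = L(W), H = -½⟨W,P⟩_F, and ħ > 0. Then ‖[P,W]‖_F² ≤ 2‖P‖_F²‖W‖_F² - 2⟨P,W⟩_F² (equivalently, ‖[P,W]‖_F² ≤ 2‖P‖_F²‖W‖_F² - 8H²). -/

import Mathlib

open Matrix BigOperators

/-- The Frobenius norm of a matrix. -/
noncomputable def frobeniusNorm' {N : ℕ} (A : Matrix (Fin N) (Fin N) ℂ) : ℝ :=
  Real.sqrt (∑ i, ∑ j, ‖A i j‖ ^ 2)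

namespace EnergyBoundAux

variable {N : ℕ}

lemma frob_sq (A : Matrix (Fin N) (Fin N) ℂ) :
    frobeniusNorm' A ^ 2 = ∑ i, ∑ j, ‖A i j‖ ^ 2 := by
  apply Real.sq_sqrt
  exact Finset.sum_nonneg fun i _ => Finset.sum_nonneg fun j _ => sq_nonneg _

lemma sum_sq_eq_trace (A : Matrix (Fin N) (Fin N) ℂ) :
    ∑ i, ∑ j, ‖A i j‖ ^ 2 = (Matrix.trace (Aᴴ * A)).re := by
  rw [Matrix.trace, Complex.re_sum, Finset.sum_comm]
  refine Finset.sum_congr rfl fun i _ => ?_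
  rw [Matrix.diag_apply, Matrix.mul_apply, Complex.re_sum]
  refine Finset.sum_congr rfl fun j _ => ?_
  rw [Matrix.conjTranspose_apply, Complex.star_def,
    mul_comm ((starRingEnd ℂ) (A j i)) (A j i), Complex.mul_conj, Complex.ofReal_re,
    Complex.sq_norm]

/-- Unitary invariance of the squared Frobenius norm. -/
lemma sum_sq_conj (U X : Matrix (Fin N) (Fin N) ℂ) (hU : Uᴴ * U = 1) :
    ∑ i, ∑ j, ‖(U * X * Uᴴ) i j‖ ^ 2 = ∑ i, ∑ j, ‖X i j‖ ^ 2 := by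
  rw [sum_sq_eq_trace, sum_sq_eq_trace]
  congr 1
  have h1 : (U * X * Uᴴ)ᴴ * (U * X * Uᴴ) = U * (Xᴴ * X) * Uᴴ := by
    simp only [Matrix.conjTranspose_mul, Matrix.conjTranspose_conjTranspose,
      Matrix.mul_assoc]
    rw [← Matrix.mul_assoc Uᴴ U, hU, Matrix.one_mul]
  rw [h1, Matrix.trace_mul_cycle, ← Matrix.mul_assoc, hU, Matrix.one_mul]

/-- The core real inequality. -/
lemma core (a d : Fin N → ℝ) (m : Fin N → Fin N → ℝ) (hm : ∀ i j, 0 ≤ m i j)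
    (hd : ∀ i, d i ^ 2 ≤ m i i) :
    (∑ i, ∑ j, (a i - a j) ^ 2 * m i j) + 2 * (∑ i, a i * d i) ^ 2
      ≤ 2 * (∑ i, a i ^ 2) * (∑ i, ∑ j, m i j) := by
  set S : ℝ := ∑ i, a i ^ 2 with hS
  have hS0 : 0 ≤ S := Finset.sum_nonneg fun i _ => sq_nonneg _
  have h1 : (∑ i, a i * d i) ^ 2 ≤ S * ∑ i, d i ^ 2 :=
    Finset.sum_mul_sq_le_sq_mul_sq Finset.univ a d
  have h2 : S * (∑ i, d i ^ 2) ≤ S * ∑ i, m i i :=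
    mul_le_mul_of_nonneg_left (Finset.sum_le_sum fun i _ => hd i) hS0
  have h3 : ∀ i j, (a i - a j) ^ 2 * m i j + 2 * S * (if i = j then m i i else 0)
      ≤ 2 * S * m i j := by
    intro i j
    by_cases hij : i = j
    · subst hij; simp
    · simp only [hij, if_false, mul_zero, add_zero]
      have hsub : a i ^ 2 + a j ^ 2 ≤ S := by
        have := Finset.sum_le_sum_of_subset_of_nonneg
          (Finset.subset_univ ({i, j} : Finset (Fin N)))
          (fun k _ _ => sq_nonneg (a k))
        rwa [Finset.sum_pair hij] at this
      have h4 : (a i - a j) ^ 2 ≤ 2 * S := by nlinarith [sq_nonneg (a i + a j)]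
      exact mul_le_mul_of_nonneg_right h4 (hm i j)
  have h5 : (∑ i, ∑ j, ((a i - a j) ^ 2 * m i j + 2 * S * (if i = j then m i i else 0)))
      ≤ ∑ i, ∑ j, 2 * S * m i j :=
    Finset.sum_le_sum fun i _ => Finset.sum_le_sum fun j _ => h3 i j
  have hrow : ∀ i, (∑ j, ((a i - a j) ^ 2 * m i j + 2 * S * (if i = j then m i i else 0)))
      = (∑ j, (a i - a j) ^ 2 * m i j) + 2 * S * m i i := by
    intro i
    rw [Finset.sum_add_distrib]
    congr 1
    simp [mul_ite, mul_zero, Finset.sum_ite_eq]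
  have h6 : (∑ i, ∑ j, ((a i - a j) ^ 2 * m i j + 2 * S * (if i = j then m i i else 0)))
      = (∑ i, ∑ j, (a i - a j) ^ 2 * m i j) + 2 * S * ∑ i, m i i := by
    simp only [hrow, Finset.sum_add_distrib, ← Finset.mul_sum]
  have h7 : (∑ i, ∑ j, 2 * S * m i j) = 2 * S * ∑ i, ∑ j, m i j := by
    simp only [← Finset.mul_sum]
  rw [h6, h7] at h5
  nlinarith [h1, h2, h5]

/-- Key inequality for a Hermitian matrix `A` and arbitrary `B`. -/
lemma key (A B : Matrix (Fin N) (Fin N) ℂ) (hA : A.IsHermitian) :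
    (∑ i, ∑ j, ‖(A * B - B * A) i j‖ ^ 2) + 2 * ((Matrix.trace (Aᴴ * B)).re) ^ 2
      ≤ 2 * (∑ i, ∑ j, ‖A i j‖ ^ 2) * (∑ i, ∑ j, ‖B i j‖ ^ 2) := by
  set U : Matrix (Fin N) (Fin N) ℂ := (hA.eigenvectorUnitary : Matrix (Fin N) (Fin N) ℂ)
    with hUdef
  set a : Fin N → ℝ := hA.eigenvalues with hadef
  set D : Matrix (Fin N) (Fin N) ℂ := Matrix.diagonal (RCLike.ofReal ∘ a) with hDdef
  have hU1 : Uᴴ * U = 1 := by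
    rw [← Matrix.star_eq_conjTranspose]
    exact Matrix.mem_unitaryGroup_iff'.mp hA.eigenvectorUnitary.2
  have hU2 : U * Uᴴ = 1 := by
    rw [← Matrix.star_eq_conjTranspose]
    exact Matrix.mem_unitaryGroup_iff.mp hA.eigenvectorUnitary.2
  have hspec : A = U * D * Uᴴ := by
    rw [← Matrix.star_eq_conjTranspose]
    exact hA.spectral_theorem
  have hDH : Dᴴ = D := by
    have hsv : star (RCLike.ofReal ∘ a : Fin N → ℂ) = (RCLike.ofReal ∘ a) := by
      funext i
      simp [Pi.star_apply, Function.comp, RCLike.star_def, RCLike.conj_ofReal]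
    rw [hDdef, Matrix.diagonal_conjTranspose, hsv]
  set M : Matrix (Fin N) (Fin N) ℂ := Uᴴ * B * U with hMdef
  have hB : B = U * M * Uᴴ := by
    rw [hMdef]
    simp only [Matrix.mul_assoc]
    rw [hU2, Matrix.mul_one, ← Matrix.mul_assoc, hU2, Matrix.one_mul]
  -- commutator
  have hcomm : A * B - B * A = U * (D * M - M * D) * Uᴴ := by
    rw [hspec, hB]
    have e1 : U * D * Uᴴ * (U * M * Uᴴ) = U * (D * M) * Uᴴ := by
      simp only [Matrix.mul_assoc]
      rw [← Matrix.mul_assoc Uᴴ U, hU1, Matrix.one_mul]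
    have e2 : U * M * Uᴴ * (U * D * Uᴴ) = U * (M * D) * Uᴴ := by
      simp only [Matrix.mul_assoc]
      rw [← Matrix.mul_assoc Uᴴ U, hU1, Matrix.one_mul]
    rw [e1, e2, ← Matrix.sub_mul, ← Matrix.mul_sub]
  -- trace term
  have htr : Matrix.trace (Aᴴ * B) = Matrix.trace (D * M) := by
    rw [hspec, hB]
    have e0 : (U * D * Uᴴ)ᴴ = U * D * Uᴴ := by
      simp only [Matrix.conjTranspose_mul, Matrix.conjTranspose_conjTranspose, hDH]
      simp only [Matrix.mul_assoc]
    rw [e0]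
    have e1 : U * D * Uᴴ * (U * M * Uᴴ) = U * (D * M) * Uᴴ := by
      simp only [Matrix.mul_assoc]
      rw [← Matrix.mul_assoc Uᴴ U, hU1, Matrix.one_mul]
    rw [e1, Matrix.trace_mul_cycle, ← Matrix.mul_assoc, hU1, Matrix.one_mul]
  have htr2 : (Matrix.trace (D * M)).re = ∑ i, a i * (M i i).re := by
    rw [Matrix.trace, Complex.re_sum]
    refine Finset.sum_congr rfl fun i _ => ?_
    rw [Matrix.diag_apply, hDdef, Matrix.diagonal_mul]
    simp [Complex.mul_re, RCLike.ofReal_alg]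
  -- norms
  have hnA : (∑ i, ∑ j, ‖A i j‖ ^ 2) = ∑ i, a i ^ 2 := by
    rw [hspec, sum_sq_conj U D hU1]
    refine Finset.sum_congr rfl fun i _ => ?_
    have hD : ∀ j, ‖D i j‖ ^ 2 = if j = i then a i ^ 2 else 0 := by
      intro j
      by_cases hij : j = i
      · subst hij
        rw [hDdef]
        simp [Matrix.diagonal_apply_eq, Function.comp_apply, RCLike.norm_ofReal, sq_abs]
      · rw [hDdef, Matrix.diagonal_apply_ne _ (fun h => hij h.symm)]
        simp [hij]
    simp only [hD]
    simp [Finset.sum_ite_eq']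
  have hnB : (∑ i, ∑ j, ‖B i j‖ ^ 2) = ∑ i, ∑ j, ‖M i j‖ ^ 2 := by
    rw [hB, sum_sq_conj U M hU1]
  have hnC : (∑ i, ∑ j, ‖(A * B - B * A) i j‖ ^ 2)
      = ∑ i, ∑ j, (a i - a j) ^ 2 * ‖M i j‖ ^ 2 := by
    rw [hcomm, sum_sq_conj U _ hU1]
    refine Finset.sum_congr rfl fun i _ => Finset.sum_congr rfl fun j _ => ?_
    have e : (D * M - M * D) i j = (RCLike.ofReal (a i - a j) : ℂ) * M i j := by
      rw [Matrix.sub_apply, hDdef, Matrix.diagonal_mul, Matrix.mul_diagonal]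
      simp only [Function.comp_apply, RCLike.ofReal_sub]
      ring
    rw [e, norm_mul, mul_pow, RCLike.norm_ofReal, sq_abs]
  -- apply core
  have hcore := core a (fun i => (M i i).re) (fun i j => ‖M i j‖ ^ 2)
    (fun i j => sq_nonneg _)
    (fun i => by
      show (M i i).re ^ 2 ≤ ‖M i i‖ ^ 2
      have h := Complex.sq_norm (M i i)
      rw [Complex.normSq_apply] at h
      nlinarith [sq_nonneg (M i i).im])
  rw [hnA, hnB, hnC, htr, htr2]
  exact hcore

end EnergyBoundAux

open EnergyBoundAux in
/-- Energy bound for the isospectral Hamiltonian flow (cf. Wu–Xu 2010, Thm 2.2). -/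
theorem energy_bound_isospectral_flow {N : ℕ}
    (L : Matrix (Fin N) (Fin N) ℂ →ₗ[ℝ] Matrix (Fin N) (Fin N) ℂ)
    (hLsa : ∀ A B : Matrix (Fin N) (Fin N) ℂ,
      (Matrix.trace (Aᴴ * L B)).re = (Matrix.trace ((L A)ᴴ * B)).re)
    (W : Matrix (Fin N) (Fin N) ℂ) (hW : Wᴴ = -W)
    (hP : (L W)ᴴ = -(L W))
    (hbar : ℝ) (hhbar : 0 < hbar) :
    letI P : Matrix (Fin N) (Fin N) ℂ := L W
    letI H : ℝ := -(1 / 2) * (Matrix.trace (Wᴴ * P)).re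
    hbar ^ 2 * frobeniusNorm' (hbar⁻¹ • (P * W - W * P)) ^ 2 ≤
      2 * frobeniusNorm' P ^ 2 * frobeniusNorm' W ^ 2 - 8 * H ^ 2 ∧
    frobeniusNorm' (P * W - W * P) ^ 2 ≤
      2 * frobeniusNorm' P ^ 2 * frobeniusNorm' W ^ 2
        - 2 * ((Matrix.trace (Pᴴ * W)).re) ^ 2 := by
  set P : Matrix (Fin N) (Fin N) ℂ := L W with hPdef
  -- the Hermitian matrices
  set A : Matrix (Fin N) (Fin N) ℂ := Complex.I • W with hAdef
  set B : Matrix (Fin N) (Fin N) ℂ := Complex.I • P with hBdef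
  have hAH : A.IsHermitian := by
    rw [Matrix.IsHermitian, hAdef, Matrix.conjTranspose_smul, hW, Complex.star_def,
      Complex.conj_I]
    rw [neg_smul, smul_neg, neg_neg]
  have hABBA : A * B - B * A = P * W - W * P := by
    rw [hAdef, hBdef, Matrix.smul_mul, Matrix.smul_mul, Matrix.mul_smul, Matrix.mul_smul,
      smul_smul, smul_smul, Complex.I_mul_I, ← smul_sub, neg_smul, one_smul, neg_sub]
  have hAHB : Aᴴ * B = Wᴴ * P := by
    rw [hAdef, hBdef, Matrix.conjTranspose_smul, Complex.star_def, Complex.conj_I,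
      Matrix.smul_mul, Matrix.mul_smul, smul_smul, neg_mul, Complex.I_mul_I, neg_neg,
      one_smul]
  have hnA : (∑ i, ∑ j, ‖A i j‖ ^ 2) = ∑ i, ∑ j, ‖W i j‖ ^ 2 := by
    refine Finset.sum_congr rfl fun i _ => Finset.sum_congr rfl fun j _ => ?_
    rw [hAdef, Matrix.smul_apply, smul_eq_mul, norm_mul, Complex.norm_I, one_mul]
  have hnB : (∑ i, ∑ j, ‖B i j‖ ^ 2) = ∑ i, ∑ j, ‖P i j‖ ^ 2 := by
    refine Finset.sum_congr rfl fun i _ => Finset.sum_congr rfl fun j _ => ?_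
    rw [hBdef, Matrix.smul_apply, smul_eq_mul, norm_mul, Complex.norm_I, one_mul]
  have hkey := key A B hAH
  rw [hABBA, hAHB, hnA, hnB] at hkey
  -- relate the two trace expressions
  have htrre : (Matrix.trace (Pᴴ * W)).re = (Matrix.trace (Wᴴ * P)).re := by
    have h1 : Pᴴ * W = (Wᴴ * P)ᴴ := by
      rw [Matrix.conjTranspose_mul, Matrix.conjTranspose_conjTranspose]
    rw [h1, Matrix.trace_conjTranspose]
    exact Complex.conj_re _
  -- main inequality
  have main : frobeniusNorm' (P * W - W * P) ^ 2
      ≤ 2 * frobeniusNorm' P ^ 2 * frobeniusNorm' W ^ 2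
        - 2 * ((Matrix.trace (Pᴴ * W)).re) ^ 2 := by
    rw [frob_sq, frob_sq, frob_sq, htrre]
    nlinarith [hkey]
  refine ⟨?_, main⟩
  -- first conjunct
  have hscale : hbar ^ 2 * frobeniusNorm' (hbar⁻¹ • (P * W - W * P)) ^ 2
      = frobeniusNorm' (P * W - W * P) ^ 2 := by
    rw [frob_sq, frob_sq]
    have : ∀ i j, ‖(hbar⁻¹ • (P * W - W * P)) i j‖ ^ 2
        = hbar⁻¹ ^ 2 * ‖(P * W - W * P) i j‖ ^ 2 := by
      intro i j
      rw [Matrix.smul_apply, norm_smul, mul_pow, Real.norm_eq_abs, sq_abs]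
    simp only [this, ← Finset.mul_sum]
    rw [← mul_assoc]
    have : hbar ^ 2 * hbar⁻¹ ^ 2 = 1 := by
      field_simp
    rw [this, one_mul]
  have hH : 8 * (-(1 / 2) * (Matrix.trace (Wᴴ * P)).re) ^ 2
      = 2 * ((Matrix.trace (Pᴴ * W)).re) ^ 2 := by
    rw [htrre]; ring
  rw [hscale, hH]
  exact main
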